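/- For every ε > 0, every twice continuously differentiable x : [0,l] → ℝ with x(0) = x(l) = 0, every y, ξ₂ ∈ ℝ, and every continuously differentiable ξ₁ : [0,l] → ℝ with ξ₁(0) = ξ₁(l) = 0, the following estimate holds: −2∫₀ˡ x''(z)·(a² x''(z) + Φ(x(z)) + B(z)·y + ξ₁(z)) dz + 2y·(c² y + ∫₀ˡ D(z) x(z) dz + ξ₂) ≤ (−2π²a²/l² + ε)·‖x'‖²_{L²} + 2·(‖B'‖_{L²} + (l/π)·‖D‖_{L²})·‖x'‖_{L²}·|y| + (2c² + ε)·y² + ε⁻¹·(‖ξ₁'‖²_{L²} + ξ₂²). -/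

import Mathlib

/-!
Integrating by parts against `x''` with the boundary conditions turns `∫ Φ(x) x''` into
`-∫ Φ'(x) x'² ≥ 0` and the `B`- and `ξ₁`-terms into `∫ B' x'` and `∫ ξ₁' x'`, which Cauchy–Schwarz
bounds by multiples of `‖x'‖`. The dissipative term `-2a²‖x''‖²` dominates `-2(π/l)²a²‖x'‖²`
because `‖x'‖² = -∫ x x'' ≤ ‖x‖ ‖x''‖` and, by Wirtinger's inequality, `‖x‖ ≤ (l/π) ‖x'‖`; the
latter also controls `∫ D x`. Young's inequality absorbs the remaining cross terms.
-/

open Set Real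

/-- `‖f‖_{L²}` on `[0,l]`. -/
noncomputable def L2norm (l : ℝ) (f : ℝ → ℝ) : ℝ :=
  Real.sqrt (∫ z in (0:ℝ)..l, (f z)^2)

open MeasureTheory intervalIntegral Filter Topology

section Interval

variable {a b : ℝ}

lemma integral_mul_deriv_eq_neg_integral_deriv_mul_of_eq_zero (hab : a ≤ b)
    {u u' v v' : ℝ → ℝ} (hu : ∀ z ∈ Icc a b, HasDerivAt u (u' z) z)
    (hv : ∀ z ∈ Icc a b, HasDerivAt v (v' z) z) (hu'c : ContinuousOn u' (Icc a b))
    (hv'c : ContinuousOn v' (Icc a b)) (ha : u a = 0) (hb : u b = 0) :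
    ∫ z in a..b, u z * v' z = -∫ z in a..b, u' z * v z := by
  rw [← uIcc_of_le hab] at hu hv
  simpa [ha, hb] using integral_mul_deriv_eq_deriv_mul hu hv
    (hu'c.intervalIntegrable_of_Icc hab) (hv'c.intervalIntegrable_of_Icc hab)

/-- Completing the square with a solution of the Riccati equation `q' = -k² - q²`:
`x'² - k²x² = (x' - q x)² + (q x²)'`, and the last term integrates to zero. -/
lemma sq_mul_integral_sq_le_integral_deriv_sq_of_riccati (hab : a ≤ b) {k : ℝ}
    {q x x' : ℝ → ℝ} (hq : ∀ z ∈ Icc a b, HasDerivAt q (-k ^ 2 - q z ^ 2) z)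
    (hx : ∀ z ∈ Icc a b, HasDerivAt x (x' z) z) (hx'c : ContinuousOn x' (Icc a b))
    (ha : x a = 0) (hb : x b = 0) :
    k ^ 2 * ∫ z in a..b, x z ^ 2 ≤ ∫ z in a..b, x' z ^ 2 := by
  have hqc : ContinuousOn q (Icc a b) := fun z hz => (hq z hz).continuousAt.continuousWithinAt
  have hxc : ContinuousOn x (Icc a b) := fun z hz => (hx z hz).continuousAt.continuousWithinAt
  set F' : ℝ → ℝ := fun z => (-k ^ 2 - q z ^ 2) * x z ^ 2 + q z * (2 * x z * x' z)
  have hF : ∀ z ∈ uIcc a b, HasDerivAt (fun z => q z * x z ^ 2) (F' z) z := by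
    rw [uIcc_of_le hab]
    intro z hz
    exact ((hq z hz).fun_mul ((hx z hz).fun_pow 2)).congr_deriv (by push_cast; ring)
  have hF'i : IntervalIntegrable F' volume a b := by
    apply ContinuousOn.intervalIntegrable_of_Icc hab
    fun_prop
  have hF'int : ∫ z in a..b, F' z = 0 := by
    rw [integral_eq_sub_of_hasDerivAt hF hF'i, ha, hb]
    ring
  have hsq : ∀ z ∈ Icc a b, F' z ≤ x' z ^ 2 - k ^ 2 * x z ^ 2 := fun z _ => by
    nlinarith [sq_nonneg (x' z - q z * x z)]
  have hx'i : IntervalIntegrable (fun z => x' z ^ 2) volume a b :=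
    (hx'c.pow 2).intervalIntegrable_of_Icc hab
  have hxi : IntervalIntegrable (fun z => k ^ 2 * x z ^ 2) volume a b :=
    ContinuousOn.intervalIntegrable_of_Icc hab (by fun_prop)
  have hmono := integral_mono_on hab hF'i (hx'i.sub hxi) hsq
  rw [hF'int, intervalIntegral.integral_sub hx'i hxi, intervalIntegral.integral_const_mul] at hmono
  linarith

/-- For `0 < k < π / (b - a)`, `q z = k cot (k (z - a) + (π - k (b - a)) / 2)` solves the Riccati
equation without a pole on `[a, b]`; then let `k → π / (b - a)`. -/
theorem sq_pi_div_mul_integral_sq_le_integral_deriv_sq (hab : a < b) {x x' : ℝ → ℝ}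
    (hx : ∀ z ∈ Icc a b, HasDerivAt x (x' z) z) (hx'c : ContinuousOn x' (Icc a b))
    (ha : x a = 0) (hb : x b = 0) :
    (π / (b - a)) ^ 2 * ∫ z in a..b, x z ^ 2 ≤ ∫ z in a..b, x' z ^ 2 := by
  have hba : 0 < b - a := sub_pos.2 hab
  have hk : ∀ k ∈ Ioo 0 (π / (b - a)),
      k ^ 2 * ∫ z in a..b, x z ^ 2 ≤ ∫ z in a..b, x' z ^ 2 := by
    rintro k ⟨hk0, hkπ⟩
    have hkba : k * (b - a) < π := (lt_div_iff₀ hba).1 hkπ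
    have hsin : ∀ z ∈ Icc a b, 0 < sin (k * (z - a) + (π - k * (b - a)) / 2) := fun z hz =>
      sin_pos_of_pos_of_lt_pi (by nlinarith [hz.1]) (by nlinarith [hz.2])
    refine sq_mul_integral_sq_le_integral_deriv_sq_of_riccati hab.le
      (q := fun z => k * (cos (k * (z - a) + (π - k * (b - a)) / 2) /
        sin (k * (z - a) + (π - k * (b - a)) / 2))) (fun z hz => ?_) hx hx'c ha hb
    have hθ : HasDerivAt (fun z => k * (z - a) + (π - k * (b - a)) / 2) k z := by
      simpa using (((hasDerivAt_id z).sub_const a).const_mul k).add_const ((π - k * (b - a)) / 2)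
    have hs := (hsin z hz).ne'
    refine ((hθ.cos.div hθ.sin hs).const_mul k).congr_deriv ?_
    generalize k * (z - a) + (π - k * (b - a)) / 2 = t at hs ⊢
    field_simp
  have hlim : Tendsto (fun k => k ^ 2 * ∫ z in a..b, x z ^ 2) (𝓝[<] (π / (b - a)))
      (𝓝 ((π / (b - a)) ^ 2 * ∫ z in a..b, x z ^ 2)) :=
    (Continuous.tendsto (by fun_prop) _).mono_left nhdsWithin_le_nhds
  exact le_of_tendsto hlim (eventually_of_mem (Ioo_mem_nhdsLT (by positivity)) hk)

lemma integral_comp_mul_deriv2_nonneg (hab : a ≤ b) {Φ Φ' x x' x'' : ℝ → ℝ}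
    (hΦd : ∀ s, HasDerivAt Φ (Φ' s) s) (hΦ'c : Continuous Φ') (hΦ'le : ∀ s, Φ' s ≤ 0)
    (hΦ0 : Φ 0 = 0) (hx : ∀ z ∈ Icc a b, HasDerivAt x (x' z) z)
    (hx' : ∀ z ∈ Icc a b, HasDerivAt x' (x'' z) z) (hx''c : ContinuousOn x'' (Icc a b))
    (ha : x a = 0) (hb : x b = 0) :
    0 ≤ ∫ z in a..b, Φ (x z) * x'' z := by
  have hxc : ContinuousOn x (Icc a b) := fun z hz => (hx z hz).continuousAt.continuousWithinAt
  have hx'c : ContinuousOn x' (Icc a b) := fun z hz =>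
    (hx' z hz).continuousAt.continuousWithinAt
  rw [integral_mul_deriv_eq_neg_integral_deriv_mul_of_eq_zero hab (u := fun z => Φ (x z))
    (fun z hz => (hΦd (x z)).comp z (hx z hz)) hx' (by fun_prop) hx''c
    (by rw [ha, hΦ0]) (by rw [hb, hΦ0]), ← intervalIntegral.integral_neg]
  exact integral_nonneg hab fun z _ => by nlinarith [hΦ'le (x z), mul_self_nonneg (x' z)]

end Interval

lemma ContinuousAt.eq_zero_of_forall_mul_nonpos {Φ : ℝ → ℝ} (hc : ContinuousAt Φ 0)
    (h : ∀ s, s * Φ s ≤ 0) : Φ 0 = 0 := by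
  apply le_antisymm
  · refine le_of_tendsto (hc.tendsto.mono_left nhdsWithin_le_nhds : Tendsto Φ (𝓝[>] 0) _) ?_
    filter_upwards [self_mem_nhdsWithin] with s (hs : 0 < s)
    exact nonpos_of_mul_nonpos_right (h s) hs
  · refine ge_of_tendsto (hc.tendsto.mono_left nhdsWithin_le_nhds : Tendsto Φ (𝓝[<] 0) _) ?_
    filter_upwards [self_mem_nhdsWithin] with s (hs : s < 0)
    exact nonneg_of_mul_nonpos_right (h s) hs

section L2norm

variable {l : ℝ}

lemma L2norm_nonneg (f : ℝ → ℝ) : 0 ≤ L2norm l f := sqrt_nonneg _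

lemma sq_L2norm (hl : 0 ≤ l) (f : ℝ → ℝ) : L2norm l f ^ 2 = ∫ z in (0:ℝ)..l, f z ^ 2 :=
  sq_sqrt (integral_nonneg hl fun _ _ => sq_nonneg _)

lemma abs_integral_mul_le_L2norm_mul_L2norm (hl : 0 ≤ l) {f g : ℝ → ℝ}
    (hf : ContinuousOn f (Icc 0 l)) (hg : ContinuousOn g (Icc 0 l)) :
    |∫ z in (0:ℝ)..l, f z * g z| ≤ L2norm l f * L2norm l g := by
  have hquad : ∀ t : ℝ, 0 ≤ L2norm l f ^ 2 * (t * t) +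
      2 * (∫ z in (0:ℝ)..l, f z * g z) * t + L2norm l g ^ 2 := by
    intro t
    have hexp : ∫ z in (0:ℝ)..l, (t * f z + g z) ^ 2 = L2norm l f ^ 2 * (t * t) +
        2 * (∫ z in (0:ℝ)..l, f z * g z) * t + L2norm l g ^ 2 := by
      rw [sq_L2norm hl, sq_L2norm hl, ← intervalIntegral.integral_mul_const,
        ← intervalIntegral.integral_const_mul, ← intervalIntegral.integral_mul_const,
        ← intervalIntegral.integral_add, ← intervalIntegral.integral_add]
      · exact integral_congr fun z _ => by ring
      all_goals exact ContinuousOn.intervalIntegrable_of_Icc hl (by fun_prop)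
    exact hexp ▸ integral_nonneg hl fun _ _ => sq_nonneg _
  have hdisc := discrim_le_zero hquad
  rw [discrim] at hdisc
  refine abs_le_of_sq_le_sq ?_ (mul_nonneg (L2norm_nonneg f) (L2norm_nonneg g))
  nlinarith

lemma L2norm_le_div_pi_mul_L2norm_deriv (hl : 0 < l) {x x' : ℝ → ℝ}
    (hx : ∀ z ∈ Icc 0 l, HasDerivAt x (x' z) z) (hx'c : ContinuousOn x' (Icc 0 l))
    (h0 : x 0 = 0) (hl0 : x l = 0) :
    L2norm l x ≤ l / π * L2norm l x' := by
  have hW := sq_pi_div_mul_integral_sq_le_integral_deriv_sq hl hx hx'c h0 hl0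
  rw [sub_zero, ← sq_L2norm hl.le, ← sq_L2norm hl.le] at hW
  rw [← pow_le_pow_iff_left₀ (L2norm_nonneg x)
    (mul_nonneg (div_nonneg hl.le pi_pos.le) (L2norm_nonneg x')) two_ne_zero, mul_pow]
  calc L2norm l x ^ 2 = (l / π) ^ 2 * ((π / l) ^ 2 * L2norm l x ^ 2) := by field_simp
    _ ≤ (l / π) ^ 2 * L2norm l x' ^ 2 := by gcongr

lemma abs_integral_mul_deriv2_le (hl : 0 ≤ l) {u u' x' x'' : ℝ → ℝ}
    (hu : ∀ z ∈ Icc 0 l, HasDerivAt u (u' z) z) (hu'c : ContinuousOn u' (Icc 0 l))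
    (hx' : ∀ z ∈ Icc 0 l, HasDerivAt x' (x'' z) z) (hx''c : ContinuousOn x'' (Icc 0 l))
    (h0 : u 0 = 0) (hl0 : u l = 0) :
    |∫ z in (0:ℝ)..l, u z * x'' z| ≤ L2norm l u' * L2norm l x' := by
  rw [integral_mul_deriv_eq_neg_integral_deriv_mul_of_eq_zero hl hu hx' hu'c hx''c h0 hl0,
    abs_neg]
  exact abs_integral_mul_le_L2norm_mul_L2norm hl hu'c fun z hz =>
    (hx' z hz).continuousAt.continuousWithinAt

lemma L2norm_deriv_le_div_pi_mul_L2norm_deriv2 (hl : 0 < l) {x x' x'' : ℝ → ℝ}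
    (hx : ∀ z ∈ Icc 0 l, HasDerivAt x (x' z) z) (hx' : ∀ z ∈ Icc 0 l, HasDerivAt x' (x'' z) z)
    (hx''c : ContinuousOn x'' (Icc 0 l)) (h0 : x 0 = 0) (hl0 : x l = 0) :
    L2norm l x' ≤ l / π * L2norm l x'' := by
  have hx'c : ContinuousOn x' (Icc 0 l) := fun z hz =>
    (hx' z hz).continuousAt.continuousWithinAt
  have hsq : L2norm l x' ^ 2 ≤ l / π * L2norm l x' * L2norm l x'' :=
    calc L2norm l x' ^ 2 = -∫ z in (0:ℝ)..l, x z * x'' z := by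
          rw [integral_mul_deriv_eq_neg_integral_deriv_mul_of_eq_zero hl.le hx hx' hx'c hx''c
            h0 hl0, neg_neg, sq_L2norm hl.le]
          exact integral_congr fun z _ => by ring
      _ ≤ L2norm l x * L2norm l x'' := (neg_le_abs _).trans
          (abs_integral_mul_le_L2norm_mul_L2norm hl.le (fun z hz =>
            (hx z hz).continuousAt.continuousWithinAt) hx''c)
      _ ≤ l / π * L2norm l x' * L2norm l x'' := by
          gcongr
          · exact L2norm_nonneg x''
          · exact L2norm_le_div_pi_mul_L2norm_deriv hl hx hx'c h0 hl0
  obtain h | h := (L2norm_nonneg (l := l) x').eq_or_lt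
  · rw [← h]
    exact mul_nonneg (div_nonneg hl.le pi_pos.le) (L2norm_nonneg x'')
  · exact le_of_mul_le_mul_right (by linear_combination hsq) h

lemma sq_mul_sq_L2norm_deriv_sub_le_integral (hl : 0 < l) (a y : ℝ)
    {Φ Φ' B B' ξ ξ' x x' x'' : ℝ → ℝ} (hΦd : ∀ s, HasDerivAt Φ (Φ' s) s)
    (hΦ'c : Continuous Φ') (hΦ'le : ∀ s, Φ' s ≤ 0) (hΦ0 : Φ 0 = 0)
    (hB : ∀ z ∈ Icc 0 l, HasDerivAt B (B' z) z) (hB'c : ContinuousOn B' (Icc 0 l))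
    (hB0 : B 0 = 0) (hBl : B l = 0)
    (hξ : ∀ z ∈ Icc 0 l, HasDerivAt ξ (ξ' z) z) (hξ'c : ContinuousOn ξ' (Icc 0 l))
    (hξ0 : ξ 0 = 0) (hξl : ξ l = 0)
    (hx : ∀ z ∈ Icc 0 l, HasDerivAt x (x' z) z) (hx' : ∀ z ∈ Icc 0 l, HasDerivAt x' (x'' z) z)
    (hx''c : ContinuousOn x'' (Icc 0 l)) (hx0 : x 0 = 0) (hxl : x l = 0) :
    a ^ 2 * (π / l * L2norm l x') ^ 2 - (|y| * L2norm l B' + L2norm l ξ') * L2norm l x' ≤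
      ∫ z in (0:ℝ)..l, x'' z * (a ^ 2 * x'' z + Φ (x z) + B z * y + ξ z) := by
  have hxc : ContinuousOn x (Icc 0 l) := fun z hz => (hx z hz).continuousAt.continuousWithinAt
  have hBc : ContinuousOn B (Icc 0 l) := fun z hz => (hB z hz).continuousAt.continuousWithinAt
  have hξc : ContinuousOn ξ (Icc 0 l) := fun z hz => (hξ z hz).continuousAt.continuousWithinAt
  have hΦc : Continuous Φ := continuous_iff_continuousAt.2 fun s => (hΦd s).continuousAt
  have hsplit : ∫ z in (0:ℝ)..l, x'' z * (a ^ 2 * x'' z + Φ (x z) + B z * y + ξ z) =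
      a ^ 2 * L2norm l x'' ^ 2 + (∫ z in (0:ℝ)..l, Φ (x z) * x'' z) +
        y * (∫ z in (0:ℝ)..l, B z * x'' z) + ∫ z in (0:ℝ)..l, ξ z * x'' z := by
    rw [sq_L2norm hl.le, ← intervalIntegral.integral_const_mul,
      ← intervalIntegral.integral_const_mul, ← intervalIntegral.integral_add,
      ← intervalIntegral.integral_add, ← intervalIntegral.integral_add]
    · exact integral_congr fun z _ => by ring
    all_goals exact ContinuousOn.intervalIntegrable_of_Icc hl.le (by fun_prop)
  have hΦterm := integral_comp_mul_deriv2_nonneg hl.le hΦd hΦ'c hΦ'le hΦ0 hx hx' hx''c hx0 hxl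
  have hBterm : |y * ∫ z in (0:ℝ)..l, B z * x'' z| ≤ |y| * (L2norm l B' * L2norm l x') := by
    rw [abs_mul]
    gcongr
    exact abs_integral_mul_deriv2_le hl.le hB hB'c hx' hx''c hB0 hBl
  have hξterm := abs_integral_mul_deriv2_le hl.le hξ hξ'c hx' hx''c hξ0 hξl
  have hx'' : π / l * L2norm l x' ≤ L2norm l x'' := by
    have h := L2norm_deriv_le_div_pi_mul_L2norm_deriv2 hl hx hx' hx''c hx0 hxl
    rw [div_mul_eq_mul_div, le_div_iff₀ pi_pos] at h
    rw [div_mul_eq_mul_div, div_le_iff₀ hl]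
    linarith
  have hx''sq : a ^ 2 * (π / l * L2norm l x') ^ 2 ≤ a ^ 2 * L2norm l x'' ^ 2 := by
    gcongr
    exact mul_nonneg (div_nonneg pi_pos.le hl.le) (L2norm_nonneg x')
  rw [hsplit]
  linarith [neg_abs_le (y * ∫ z in (0:ℝ)..l, B z * x'' z),
    neg_abs_le (∫ z in (0:ℝ)..l, ξ z * x'' z)]

end L2norm

theorem stmt7_general (l a c : ℝ) (hl : 0 < l)
    (Φ Φ' : ℝ → ℝ) (hΦd : ∀ s, HasDerivAt Φ (Φ' s) s) (hΦ'c : Continuous Φ')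
    (hΦ'le : ∀ s : ℝ, Φ' s ≤ 0) (hΦ : ∀ s : ℝ, s * Φ s ≤ 0)
    (D : ℝ → ℝ) (hD : ContinuousOn D (Icc 0 l))
    (B B' : ℝ → ℝ) (hB : ∀ z ∈ Icc (0:ℝ) l, HasDerivAt B (B' z) z)
    (hB'c : ContinuousOn B' (Icc 0 l)) (hB0 : B 0 = 0) (hBl : B l = 0)
    (ε : ℝ) (hε : 0 < ε)
    (x x' x'' : ℝ → ℝ)
    (hx : ∀ z ∈ Icc (0:ℝ) l, HasDerivAt x (x' z) z)
    (hx' : ∀ z ∈ Icc (0:ℝ) l, HasDerivAt x' (x'' z) z)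
    (hx''c : ContinuousOn x'' (Icc 0 l))
    (hx0 : x 0 = 0) (hxl : x l = 0)
    (y ξ₂ : ℝ)
    (ξ₁ ξ₁' : ℝ → ℝ) (hξ₁ : ∀ z ∈ Icc (0:ℝ) l, HasDerivAt ξ₁ (ξ₁' z) z)
    (hξ₁'c : ContinuousOn ξ₁' (Icc 0 l)) (hξ₁0 : ξ₁ 0 = 0) (hξ₁l : ξ₁ l = 0) :
    -2 * (∫ z in (0:ℝ)..l, x'' z * (a^2 * x'' z + Φ (x z) + B z * y + ξ₁ z)) +
      2 * y * (c^2 * y + (∫ z in (0:ℝ)..l, D z * x z) + ξ₂) ≤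
    (-2 * π^2 * a^2 / l^2 + ε) * (L2norm l x')^2 +
      2 * (L2norm l B' + (l / π) * L2norm l D) * L2norm l x' * |y| +
      (2 * c^2 + ε) * y^2 + ε⁻¹ * ((L2norm l ξ₁')^2 + ξ₂^2) := by
  have hΦ0 := (hΦd 0).continuousAt.eq_zero_of_forall_mul_nonpos hΦ
  have hxx'' := sq_mul_sq_L2norm_deriv_sub_le_integral hl a y hΦd hΦ'c hΦ'le hΦ0 hB hB'c hB0
    hBl hξ₁ hξ₁'c hξ₁0 hξ₁l hx hx' hx''c hx0 hxl
  have hx'c : ContinuousOn x' (Icc 0 l) := fun z hz => (hx' z hz).continuousAt.continuousWithinAt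
  have hDx : y * (∫ z in (0:ℝ)..l, D z * x z) ≤ |y| * (L2norm l D * (l / π * L2norm l x')) := by
    refine (le_abs_self _).trans ?_
    rw [abs_mul]
    gcongr
    calc |∫ z in (0:ℝ)..l, D z * x z| ≤ L2norm l D * L2norm l x :=
          abs_integral_mul_le_L2norm_mul_L2norm hl.le hD
            fun z hz => (hx z hz).continuousAt.continuousWithinAt
      _ ≤ L2norm l D * (l / π * L2norm l x') := by
          gcongr
          · exact L2norm_nonneg D
          · exact L2norm_le_div_pi_mul_L2norm_deriv hl hx hx'c hx0 hxl
  have hξ₁young := two_mul_le_add_mul_sq (a := L2norm l x') (b := L2norm l ξ₁') hε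
  have hξ₂young := two_mul_le_add_mul_sq (a := y) (b := ξ₂) hε
  linear_combination 2 * hxx'' + 2 * hDx + hξ₁young + hξ₂young

/-- estimate for `V̇` in the proof of Proposition 3:
`−2∫₀ˡ x''·(a²x'' + Φ(x) + B y + ξ₁) + 2y·(c²y + ∫₀ˡ D x + ξ₂)
  ≤ (−2π²a²/l² + ε)‖x'‖²_{L²} + 2(‖B'‖_{L²} + (l/π)‖D‖_{L²})‖x'‖_{L²}|y|
    + (2c² + ε)y² + ε⁻¹(‖ξ₁'‖²_{L²} + ξ₂²)`. -/
theorem stmt7 (l a c : ℝ) (hl : 0 < l) (ha : 0 < a) (hc : 0 < c)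
    (Φ Φ' : ℝ → ℝ) (hΦd : ∀ s, HasDerivAt Φ (Φ' s) s) (hΦ'c : Continuous Φ')
    (hΦ'le : ∀ s : ℝ, Φ' s ≤ 0) (hΦ : ∀ s : ℝ, s * Φ s ≤ 0)
    (D : ℝ → ℝ) (hD : ContinuousOn D (Icc 0 l))
    (B B' : ℝ → ℝ) (hB : ∀ z ∈ Icc (0:ℝ) l, HasDerivAt B (B' z) z)
    (hB'c : ContinuousOn B' (Icc 0 l)) (hB0 : B 0 = 0) (hBl : B l = 0)
    (ε : ℝ) (hε : 0 < ε)
    (x x' x'' : ℝ → ℝ)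
    (hx : ∀ z ∈ Icc (0:ℝ) l, HasDerivAt x (x' z) z)
    (hx' : ∀ z ∈ Icc (0:ℝ) l, HasDerivAt x' (x'' z) z)
    (hx''c : ContinuousOn x'' (Icc 0 l))
    (hx0 : x 0 = 0) (hxl : x l = 0)
    (y ξ₂ : ℝ)
    (ξ₁ ξ₁' : ℝ → ℝ) (hξ₁ : ∀ z ∈ Icc (0:ℝ) l, HasDerivAt ξ₁ (ξ₁' z) z)
    (hξ₁'c : ContinuousOn ξ₁' (Icc 0 l)) (hξ₁0 : ξ₁ 0 = 0) (hξ₁l : ξ₁ l = 0) :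
    -2 * (∫ z in (0:ℝ)..l, x'' z * (a^2 * x'' z + Φ (x z) + B z * y + ξ₁ z)) +
      2 * y * (c^2 * y + (∫ z in (0:ℝ)..l, D z * x z) + ξ₂) ≤
    (-2 * π^2 * a^2 / l^2 + ε) * (L2norm l x')^2 +
      2 * (L2norm l B' + (l / π) * L2norm l D) * L2norm l x' * |y| +
      (2 * c^2 + ε) * y^2 + ε⁻¹ * ((L2norm l ξ₁')^2 + ξ₂^2) :=
  stmt7_general l a c hl Φ Φ' hΦd hΦ'c hΦ'le hΦ D hD B B' hB hB'c hB0 hBl ε hε x x' x'' hx hx' hx''c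
    hx0 hxl y ξ₂ ξ₁ ξ₁' hξ₁ hξ₁'c hξ₁0 hξ₁l
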